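/- Let Φ be a real n×m matrix whose columns all have unit Euclidean norm, let 1 ≤ k < m, and suppose the Babel function satisfies μ₁(k) < 1/2. Then for every index set A ⊆ {1,…,m} with |A| = k and every vector v ∈ ℝ^k, ‖Φ_A v‖₂² > (1/2)‖v‖₂²; in particular Φ_A has full column rank and its smallest singular value exceeds 1/√2. -/

import Mathlib

open Matrix

/-- The Euclidean (ℓ₂) norm of a finitely indexed real vector. -/
noncomputable def enorm' {ι : Type*} [Fintype ι] (v : ι → ℝ) : ℝ :=
  ‖(WithLp.equiv 2 (ι → ℝ)).symm v‖

/-- The Babel function `μ₁(k)`: the maximum, over index sets `Λ` of cardinality `k`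
and indices `i ∉ Λ`, of `∑_{j∈Λ} |⟨φ_i, φ_j⟩|`, where `⟨φ_i, φ_j⟩ = (ΦᵀΦ) i j`. -/
noncomputable def babel {n m : ℕ} (Φ : Matrix (Fin n) (Fin m) ℝ) (k : ℕ) : ℝ :=
  sSup {c : ℝ | ∃ Λ : Finset (Fin m), Λ.card = k ∧
    ∃ i, i ∉ Λ ∧ c = ∑ j ∈ Λ, |(Φᵀ * Φ) i j|}

/-- The submatrix of `Φ` consisting of the columns indexed by the finite set `A`. -/
def subCols {n m : ℕ} (Φ : Matrix (Fin n) (Fin m) ℝ) (A : Finset (Fin m)) :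
    Matrix (Fin n) ↥A ℝ :=
  Matrix.of fun i (j : ↥A) => Φ i j.1


/-! The Gram matrix `G = Φ_Aᵀ Φ_A` has unit diagonal, and each row of `G` has off-diagonal absolute
sum at most `μ₁(k)`: the other `k - 1` indices of `A`, padded by one index outside `A` (which exists
as `k < m`), form a set of size `k` in the definition of `μ₁(k)`. Bounding each off-diagonal term of
`vᵀ G v` by AM-GM, `|v_i v_j G_ij| ≤ (v_i² + v_j²) / 2 · |G_ij|`, gives
`‖Φ_A v‖² = vᵀ G v ≥ (1 - μ₁(k)) ‖v‖² > ‖v‖² / 2`. -/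

section QuadraticForm

variable {ι : Type*} [Fintype ι]

lemma enorm'_sq (v : ι → ℝ) : enorm' v ^ 2 = v ⬝ᵥ v := by
  rw [enorm', EuclideanSpace.norm_eq, Real.sq_sqrt (by positivity)]
  simp [dotProduct, Real.norm_eq_abs, sq]

lemma enorm'_pos {v : ι → ℝ} (hv : v ≠ 0) : 0 < enorm' v :=
  norm_pos_iff.mpr fun h => hv ((WithLp.equiv 2 (ι → ℝ)).symm.injective (by simpa using h))

lemma enorm'_mulVec_sq {κ : Type*} [Fintype κ] (M : Matrix κ ι ℝ) (v : ι → ℝ) :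
    enorm' (M *ᵥ v) ^ 2 = v ⬝ᵥ (Mᵀ * M) *ᵥ v := by
  rw [enorm'_sq, ← mulVec_mulVec, dotProduct_mulVec v, vecMul_transpose]

/-- The quadratic-form version of Gershgorin's circle theorem. -/
lemma one_sub_mul_dotProduct_le_dotProduct_mulVec {G : Matrix ι ι ℝ} (hG : G.IsSymm)
    (hdiag : ∀ i, G i i = 1) {δ : ℝ} (hrow : ∀ i, ∑ j, |G i j| ≤ 1 + δ) (v : ι → ℝ) :
    (1 - δ) * (v ⬝ᵥ v) ≤ v ⬝ᵥ G *ᵥ v := by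
  classical
  have hterm : ∀ i j, 2 * (if i = j then v i ^ 2 else 0) - (v i ^ 2 + v j ^ 2) / 2 * |G i j|
      ≤ v i * (G i j * v j) := by
    intro i j
    split_ifs with hij
    · subst hij
      rw [hdiag, abs_one]
      nlinarith
    · have hamgm := two_mul_le_add_sq |v i| |v j|
      have hlow := neg_abs_le (v i * v j * G i j)
      rw [abs_mul, abs_mul] at hlow
      rw [← sq_abs (v i), ← sq_abs (v j)]
      nlinarith [abs_nonneg (G i j)]
  -- symmetry turns the column sums of `|G|` into row sums
  have hsymm : ∑ i, ∑ j, (v i ^ 2 + v j ^ 2) / 2 * |G i j| = ∑ i, v i ^ 2 * ∑ j, |G i j| := by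
    have hswap : ∑ i, ∑ j, v j ^ 2 * |G i j| = ∑ i, ∑ j, v i ^ 2 * |G i j| := by
      rw [Finset.sum_comm]
      simp_rw [hG.apply]
    simp_rw [add_div, add_mul, Finset.sum_add_distrib, div_mul_eq_mul_div, ← Finset.sum_div,
      hswap, Finset.mul_sum]
    ring
  calc (1 - δ) * (v ⬝ᵥ v) = 2 * ∑ i, v i ^ 2 - (1 + δ) * ∑ i, v i ^ 2 := by
        simp only [dotProduct, sq]; ring
    _ ≤ 2 * ∑ i, v i ^ 2 - ∑ i, v i ^ 2 * ∑ j, |G i j| := by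
        rw [mul_comm (1 + δ), Finset.sum_mul]
        gcongr with i
        exact hrow i
    _ = ∑ i, ∑ j, (2 * (if i = j then v i ^ 2 else 0) - (v i ^ 2 + v j ^ 2) / 2 * |G i j|) := by
        simp [Finset.sum_sub_distrib, ← Finset.mul_sum, hsymm]
    _ ≤ v ⬝ᵥ G *ᵥ v := by
        simp only [dotProduct, mulVec, Finset.mul_sum]
        exact Finset.sum_le_sum fun i _ => Finset.sum_le_sum fun j _ => hterm i j

end QuadraticForm

section Babel

variable {n m : ℕ} (Φ : Matrix (Fin n) (Fin m) ℝ)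

lemma gram_apply_self_eq_one (hunit : ∀ j : Fin m, enorm' (fun i => Φ i j) = 1) (j : Fin m) :
    (Φᵀ * Φ) j j = 1 := by
  have h := enorm'_sq fun i => Φ i j
  rw [hunit, one_pow] at h
  rw [h, mul_apply]
  rfl

lemma transpose_subCols_mul_subCols_apply (A : Finset (Fin m)) (i j : ↥A) :
    ((subCols Φ A)ᵀ * subCols Φ A) i j = (Φᵀ * Φ) i j := by
  simp [mul_apply, subCols]

lemma le_babel {k : ℕ} {Λ : Finset (Fin m)} (hΛ : Λ.card = k) {i : Fin m} (hi : i ∉ Λ) :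
    ∑ j ∈ Λ, |(Φᵀ * Φ) i j| ≤ babel Φ k := by
  refine le_csSup ?_ ⟨Λ, hΛ, i, hi, rfl⟩
  refine (Set.finite_range fun p : Finset (Fin m) × Fin m => ∑ j ∈ p.1, |(Φᵀ * Φ) p.2 j|)
    |>.subset ?_ |>.bddAbove
  rintro c ⟨Λ, -, i, -, rfl⟩
  exact ⟨(Λ, i), rfl⟩

lemma sum_abs_gram_le_babel {k : ℕ} (hkm : k < m) {Λ : Finset (Fin m)} (hΛ : Λ.card ≤ k)
    {i : Fin m} (hi : i ∉ Λ) : ∑ j ∈ Λ, |(Φᵀ * Φ) i j| ≤ babel Φ k := by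
  have hsub : Λ ⊆ Finset.univ.erase i := fun j hj => Finset.mem_erase.mpr ⟨by grind, by simp⟩
  obtain ⟨Λ', hΛΛ', hΛ'i, hΛ'⟩ := Finset.exists_subsuperset_card_eq hsub hΛ
    (by rw [Finset.card_erase_of_mem (Finset.mem_univ i), Finset.card_univ, Fintype.card_fin]
        omega)
  calc ∑ j ∈ Λ, |(Φᵀ * Φ) i j| ≤ ∑ j ∈ Λ', |(Φᵀ * Φ) i j| :=
        Finset.sum_le_sum_of_subset_of_nonneg hΛΛ' fun _ _ _ => abs_nonneg _
    _ ≤ babel Φ k := le_babel Φ hΛ' fun h => by simpa using hΛ'i h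

end Babel

theorem babel_half_implies_well_conditioned_general {n m : ℕ}
    (Φ : Matrix (Fin n) (Fin m) ℝ)
    (hunit : ∀ j : Fin m, enorm' (fun i => Φ i j) = 1)
    (k : ℕ) (hkm : k < m)
    (hbabel : babel Φ k < 1 / 2) :
    ∀ A : Finset (Fin m), A.card = k →
      (∀ v : ↥A → ℝ, v ≠ 0 →
        1 / 2 * (enorm' v) ^ 2 < (enorm' ((subCols Φ A).mulVec v)) ^ 2) ∧
      Function.Injective (subCols Φ A).mulVec := by
  intro A hA
  have hdiag (i : ↥A) : ((subCols Φ A)ᵀ * subCols Φ A) i i = 1 := by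
    rw [transpose_subCols_mul_subCols_apply, gram_apply_self_eq_one Φ hunit]
  have hrow (i : ↥A) : ∑ j, |((subCols Φ A)ᵀ * subCols Φ A) i j| ≤ 1 + babel Φ k := by
    simp_rw [transpose_subCols_mul_subCols_apply]
    rw [Finset.sum_coe_sort A fun j => |(Φᵀ * Φ) i j|, ← Finset.add_sum_erase A _ i.2,
      gram_apply_self_eq_one Φ hunit, abs_one]
    grw [sum_abs_gram_le_babel Φ hkm (by grind) (Finset.notMem_erase _ _)]
  have hG : ((subCols Φ A)ᵀ * subCols Φ A).IsSymm := by simp [IsSymm, transpose_mul]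
  have hwell (v : ↥A → ℝ) (hv : v ≠ 0) :
      1 / 2 * enorm' v ^ 2 < enorm' (subCols Φ A *ᵥ v) ^ 2 := by
    have := one_sub_mul_dotProduct_le_dotProduct_mulVec hG hdiag hrow v
    rw [← enorm'_sq] at this
    rw [enorm'_mulVec_sq]
    nlinarith [pow_pos (enorm'_pos hv) 2]
  refine ⟨hwell, fun v w h => ?_⟩
  by_contra hvw
  have := hwell (v - w) (sub_ne_zero.mpr hvw)
  rw [mulVec_sub, h, sub_self, enorm'_sq 0, dotProduct_zero] at this
  exact this.not_ge (by positivity)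

/-- for a dictionary `Φ` with unit-norm columns, `1 ≤ k < m`, and
Babel function `μ₁(k) < 1/2`, every `k`-column submatrix `Φ_A` satisfies
`‖Φ_A v‖₂² > (1/2)‖v‖₂²` for all `v ≠ 0`; in particular `Φ_A` has full column
rank and its smallest singular value exceeds `1/√2`. -/
theorem babel_half_implies_well_conditioned {n m : ℕ}
    (Φ : Matrix (Fin n) (Fin m) ℝ)
    (hunit : ∀ j : Fin m, enorm' (fun i => Φ i j) = 1)
    (k : ℕ) (hk1 : 1 ≤ k) (hkm : k < m)
    (hbabel : babel Φ k < 1 / 2) :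
    ∀ A : Finset (Fin m), A.card = k →
      (∀ v : ↥A → ℝ, v ≠ 0 →
        1 / 2 * (enorm' v) ^ 2 < (enorm' ((subCols Φ A).mulVec v)) ^ 2) ∧
      Function.Injective (subCols Φ A).mulVec :=
  babel_half_implies_well_conditioned_general Φ hunit k hkm hbabel
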